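/- Let d ≥ 2 and let ℓ_j > 0 for j = 1,…,d. Suppose u and ũ are global solutions of the thin obstacle problem in R^{d+1} with at most quadratic growth admitting expansions u = p − c + v and ũ = p − c̃ + ṽ, where p is a fixed quadratic harmonic polynomial even in y with {p(·,0) ≤ c} compact, c, c̃ ∈ R, and v, ṽ → 0 at infinity. If c = c̃ then u = ũ. In other words, the map sending a solution with compact contact set and at most quadratic growth to its polynomial expansion at infinity is injective. -/

import Mathlib

open MeasureTheory Metric Filter Topology

noncomputable section

abbrev Euc (n : ℕ) : Type := EuclideanSpace ℝ (Fin n)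

def toE {n : ℕ} (f : Fin n → ℝ) : Euc n := WithLp.toLp 2 f

def SubharmonicOnSet {n : ℕ} (u : Euc n → ℝ) (s : Set (Euc n)) : Prop :=
  ContinuousOn u s ∧
    ∀ x r, 0 < r → closedBall x r ⊆ s → u x ≤ ⨍ y in ball x r, u y ∂volume

def SuperharmonicOnSet {n : ℕ} (u : Euc n → ℝ) (s : Set (Euc n)) : Prop :=
  ContinuousOn u s ∧
    ∀ x r, 0 < r → closedBall x r ⊆ s → (⨍ y in ball x r, u y ∂volume) ≤ u x

def HarmonicOnSet {n : ℕ} (u : Euc n → ℝ) (s : Set (Euc n)) : Prop :=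
  ContinuousOn u s ∧
    ∀ x r, 0 < r → closedBall x r ⊆ s → (⨍ y in ball x r, u y ∂volume) = u x

def reflLast (d : ℕ) (X : Euc (d+1)) : Euc (d+1) :=
  toE (Function.update (fun i => X i) (Fin.last d) (-(X (Fin.last d))))

def IsThinObstacleSolution (d : ℕ) (u : Euc (d+1) → ℝ) : Prop :=
  Continuous u ∧
  (∀ X : Euc (d+1), X (Fin.last d) = 0 → 0 ≤ u X) ∧
  (∀ X, u (reflLast d X) = u X) ∧
  SuperharmonicOnSet u Set.univ ∧
  HarmonicOnSet u ({X : Euc (d+1) | X (Fin.last d) ≠ 0} ∪ {X | 0 < u X})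

def contactSet (d : ℕ) (u : Euc (d+1) → ℝ) : Set (Euc (d+1)) :=
  {X | u X = 0 ∧ X (Fin.last d) = 0}

def IsObstacleSolutionOn (d : ℕ) (U : Euc (d+1) → ℝ) (s : Set (Euc (d+1))) : Prop :=
  ContinuousOn U s ∧ (∀ X ∈ s, 0 ≤ U X) ∧
  SubharmonicOnSet U s ∧
  SuperharmonicOnSet (fun X => U X - ‖X‖^2 / (2*((d:ℝ)+1))) s ∧
  HarmonicOnSet (fun X => U X - ‖X‖^2 / (2*((d:ℝ)+1))) (s ∩ {X | 0 < U X})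

def IsObstacleSolution (d : ℕ) (U : Euc (d+1) → ℝ) : Prop :=
  IsObstacleSolutionOn d U Set.univ

def QuadGrowth (d : ℕ) (u : Euc (d+1) → ℝ) : Prop :=
  ∃ C : ℝ, ∀ X : Euc (d+1), |u X| ≤ C * (‖X‖^2 + 1)

def sphereInt (d : ℕ) (u : Euc (d+1) → ℝ) (r : ℝ) : ℝ :=
  ∫ X in sphere (0 : Euc (d+1)) r, (u X)^2 ∂μH[(d : ℝ)]

def frequency (d : ℕ) (u : Euc (d+1) → ℝ) (r : ℝ) : ℝ :=
  r * (∫ X in ball (0 : Euc (d+1)) r, ‖gradient u X‖^2 ∂volume) / sphereInt d u r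

def newtonPot (d : ℕ) (A : Set (Euc (d+1))) (X : Euc (d+1)) : ℝ :=
  (1 / (((d:ℝ)+1) * ((d:ℝ)-1) * (volume (ball (0 : Euc (d+1)) 1)).toReal)) *
    ∫ Y in A, ‖X - Y‖ ^ ((1:ℝ) - (d:ℝ)) ∂volume

def thinEllipsoid (d : ℕ) (ℓ : Fin d → ℝ) : Set (Euc (d+1)) :=
  {X : Euc (d+1) | (∑ j : Fin d, (X (Fin.castSucc j))^2 / (ℓ j)^2) ≤ 1 ∧ X (Fin.last d) = 0}

def Wlin (d : ℕ) (U : Euc (d+1) → ℝ) (X : Euc (d+1)) : ℝ :=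
  U X - (X (Fin.last d))^2 / 2

def hatW (d : ℕ) (U : Euc (d+1) → ℝ) (X : Euc (d+1)) : ℝ :=
  Wlin d U X / Real.sqrt (sphereInt d (Wlin d U) 1)

def lap (d : ℕ) (φ : Euc (d+1) → ℝ) (X : Euc (d+1)) : ℝ :=
  ∑ i : Fin (d+1),
    fderiv ℝ (fun Y => fderiv ℝ φ Y (EuclideanSpace.single i 1)) X (EuclideanSpace.single i 1)

def polyEval (d : ℕ) (p : MvPolynomial (Fin (d+1)) ℝ) (X : Euc (d+1)) : ℝ :=
  MvPolynomial.eval (fun i => X i) p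


open Set

/-!
Since `c = c'`, the difference `u - u'` tends to `0` at infinity. Fix `ε > 0`. Where
`u - u' > ε`, the function `u` is positive also on the thin space `{y = 0}` (because `u' ≥ 0`
there), so `u` is harmonic while `u'` is superharmonic, and `u - u'` has the sub-mean-value
property. A continuous function that is below `ε` at infinity and sub-mean-value on `{· > ε}`
stays below `ε`: otherwise its (attained) maximum exceeds `ε`, and the set where the maximum is
attained is closed, nonempty and, by the mean value inequality, open, hence everything.
So `u ≤ u' + ε` for every `ε > 0`, and by symmetry `u = u'`.
-/

namespace MeasureTheory

theorem average_sub {α E : Type*} [MeasurableSpace α] [NormedAddCommGroup E] [NormedSpace ℝ E]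
    {μ : Measure α} {f g : α → E} (hf : Integrable f μ) (hg : Integrable g μ) :
    ⨍ x, (f x - g x) ∂μ = ⨍ x, f x ∂μ - ⨍ x, g x ∂μ := by
  simp only [average_eq, integral_sub hf hg, smul_sub]

theorem eqOn_const_of_le_of_le_setAverage {X : Type*} [TopologicalSpace X] [MeasurableSpace X]
    [OpensMeasurableSpace X] {μ : Measure X} [μ.IsOpenPosMeasure] {f : X → ℝ} {s : Set X} {M : ℝ}
    (hs : IsOpen s) (hμs : μ s ≠ ⊤) (hf : ContinuousOn f s) (hfi : IntegrableOn f s μ)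
    (hle : ∀ x ∈ s, f x ≤ M) (havg : M ≤ ⨍ x in s, f x ∂μ) : EqOn f (fun _ => M) s := by
  rcases s.eq_empty_or_nonempty with rfl | hne
  · exact eqOn_empty _ _
  have hμ0 : μ s ≠ 0 := (hs.measure_pos μ hne).ne'
  have hM : IntegrableOn (fun _ => M) s μ := integrableOn_const hμs
  have hgap_nonneg : 0 ≤ᵐ[μ.restrict s] fun x => M - f x :=
    ae_restrict_of_forall_mem hs.measurableSet fun x hx => sub_nonneg.2 (hle x hx)
  have havg_gap : ⨍ x in s, (M - f x) ∂μ ≤ 0 := by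
    rw [average_sub hM hfi, setAverage_const hμ0 hμs]
    linarith
  have hint_gap : ∫ x in s, (M - f x) ∂μ = 0 := by
    refine le_antisymm ?_ (integral_nonneg_of_ae hgap_nonneg)
    rw [setAverage_eq, smul_eq_mul] at havg_gap
    exact nonpos_of_mul_nonpos_right havg_gap (inv_pos.2 (ENNReal.toReal_pos hμ0 hμs))
  have hae := (setIntegral_eq_zero_iff_of_nonneg_ae hgap_nonneg (hM.sub hfi)).1 hint_gap
  intro x hx
  have := Measure.eqOn_open_of_ae_eq hae hs (continuousOn_const.sub hf) continuousOn_const hx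
  simpa [sub_eq_zero, eq_comm] using this

end MeasureTheory

theorem Continuous.integrableOn_ball {X E : Type*} [MetricSpace X] [ProperSpace X]
    [MeasurableSpace X] [OpensMeasurableSpace X] {μ : Measure X} [IsFiniteMeasureOnCompacts μ]
    [NormedAddCommGroup E] {f : X → E} (hf : Continuous f) (x : X) (r : ℝ) :
    IntegrableOn f (ball x r) μ :=
  (hf.continuousOn.integrableOn_compact (isCompact_closedBall x r)).mono_set
    ball_subset_closedBall

section MaximumPrinciple

variable {X : Type*} [MetricSpace X] [ProperSpace X] [PreconnectedSpace X] [NoncompactSpace X]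
  [MeasurableSpace X] [OpensMeasurableSpace X] {μ : Measure X} [μ.IsOpenPosMeasure]
  [IsFiniteMeasureOnCompacts μ]

theorem le_of_le_setAverage_of_eventually_lt {w : X → ℝ} {c : ℝ} (hw : Continuous w)
    (hlt : ∀ᶠ x in cocompact X, w x < c)
    (hsub : ∀ x r, 0 < r → closedBall x r ⊆ {y | c < w y} → w x ≤ ⨍ y in ball x r, w y ∂μ)
    (x : X) : w x ≤ c := by
  by_contra! hx
  obtain ⟨z, hz⟩ := hw.exists_forall_ge' x (hlt.mono fun y hy => (hy.trans hx).le)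
  have hmax_open : IsOpen {y | w y = w z} := by
    refine isOpen_iff_mem_nhds.2 fun y hy => ?_
    have hcy : c < w y := (hy : w y = w z) ▸ hx.trans_le (hz x)
    obtain ⟨r, hr, hball⟩ :=
      nhds_basis_closedBall.mem_iff.1 ((isOpen_lt continuous_const hw).mem_nhds hcy)
    have hball_max := eqOn_const_of_le_of_le_setAverage isOpen_ball measure_ball_lt_top.ne
      hw.continuousOn (hw.integrableOn_ball y r) (fun y' _ => hz y')
      ((hy : w y = w z) ▸ hsub y r hr hball)
    filter_upwards [ball_mem_nhds y hr] with y' hy' using hball_max hy'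
  have hmax_univ := IsClopen.eq_univ ⟨isClosed_eq hw continuous_const, hmax_open⟩ ⟨z, rfl⟩
  obtain ⟨y, hy⟩ := hlt.exists
  have hyz : w y = w z := eq_univ_iff_forall.1 hmax_univ y
  linarith [hz x]

end MaximumPrinciple

namespace IsThinObstacleSolution

variable {d : ℕ} {u u' : Euc (d+1) → ℝ}

theorem le_setAverage_sub (hu : IsThinObstacleSolution d u) (hu' : IsThinObstacleSolution d u')
    {x : Euc (d+1)} {r : ℝ} (hr : 0 < r) (hball : closedBall x r ⊆ {Y | u' Y < u Y}) :
    u x - u' x ≤ ⨍ Y in ball x r, (u Y - u' Y) := by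
  obtain ⟨hcont, -, -, -, hharm⟩ := hu
  obtain ⟨hcont', hnonneg', -, hsuper', -⟩ := hu'
  have hball_harm : closedBall x r ⊆ {Y : Euc (d+1) | Y (Fin.last d) ≠ 0} ∪ {Y | 0 < u Y} := by
    intro Y hY
    by_cases hY0 : Y (Fin.last d) = 0
    · exact Or.inr ((hnonneg' Y hY0).trans_lt (hball hY))
    · exact Or.inl hY0
  rw [average_sub (hcont.integrableOn_ball x r) (hcont'.integrableOn_ball x r),
    hharm.2 x r hr hball_harm]
  linarith [hsuper'.2 x r hr (subset_univ _)]

theorem le_of_tendsto_sub (hu : IsThinObstacleSolution d u) (hu' : IsThinObstacleSolution d u')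
    (hlim : Tendsto (fun X => u X - u' X) (cocompact (Euc (d+1))) (𝓝 0)) : u ≤ u' := by
  refine fun X => le_of_forall_pos_le_add fun ε hε => ?_
  have hsub_le : u X - u' X ≤ ε :=
    le_of_le_setAverage_of_eventually_lt (μ := volume) (w := fun Y => u Y - u' Y)
      (hu.1.sub hu'.1) (hlim.eventually (gt_mem_nhds hε))
      (fun x r hr hball => hu.le_setAverage_sub hu' hr fun Y hY =>
        sub_pos.1 (hε.trans (hball hY))) X
  linarith

end IsThinObstacleSolution

theorem expansion_injectivity_general (d : ℕ)
    (p : MvPolynomial (Fin (d+1)) ℝ)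
    (c c' : ℝ)
    (u u' : Euc (d+1) → ℝ)
    (hu : IsThinObstacleSolution d u) (hu' : IsThinObstacleSolution d u')
    (hv : Tendsto (fun X : Euc (d+1) => |u X - (polyEval d p X - c)|) (cocompact _) (nhds 0))
    (hv' : Tendsto (fun X : Euc (d+1) => |u' X - (polyEval d p X - c')|) (cocompact _) (nhds 0))
    (hcc : c = c') :
    u = u' := by
  subst hcc
  have hlim : Tendsto (fun X => u X - u' X) (cocompact (Euc (d+1))) (𝓝 0) := by
    simpa using ((tendsto_zero_iff_abs_tendsto_zero _).2 hv).sub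
      ((tendsto_zero_iff_abs_tendsto_zero _).2 hv')
  exact le_antisymm (hu.le_of_tendsto_sub hu' hlim)
    (hu'.le_of_tendsto_sub hu (by simpa using hlim.neg))

theorem expansion_injectivity (d : ℕ) (hd : 2 ≤ d)
    (p : MvPolynomial (Fin (d+1)) ℝ)
    (hdeg : p.totalDegree ≤ 2)
    (hharm : HarmonicOnSet (polyEval d p) Set.univ)
    (heven : ∀ X : Euc (d+1), polyEval d p (reflLast d X) = polyEval d p X)
    (c c' : ℝ)
    (hcpt : IsCompact {x : Euc d | MvPolynomial.eval (Fin.snoc (fun j => x j) 0) p ≤ c})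
    (u u' : Euc (d+1) → ℝ)
    (hu : IsThinObstacleSolution d u) (hu' : IsThinObstacleSolution d u')
    (hg : QuadGrowth d u) (hg' : QuadGrowth d u')
    (hΛ : (contactSet d u).Nonempty ∧ IsCompact (contactSet d u))
    (hΛ' : (contactSet d u').Nonempty ∧ IsCompact (contactSet d u'))
    (hv : Tendsto (fun X : Euc (d+1) => |u X - (polyEval d p X - c)|) (cocompact _) (nhds 0))
    (hv' : Tendsto (fun X : Euc (d+1) => |u' X - (polyEval d p X - c')|) (cocompact _) (nhds 0))
    (hcc : c = c') :
    u = u' :=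
  expansion_injectivity_general d p c c' u u' hu hu' hv hv' hcc
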